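/- arXiv:1608.08850 — 4 statements merged into one kernel-verified Lean document; each statement's English description precedes it below -/
import Mathlib

section
/- Let v : ℝ³ → ℝ³ and p : ℝ³ → ℝ be smooth compactly supported functions satisfying the steady Euler momentum equations ∑ⱼ ∂(vⁱvʲ)/∂xⱼ + ∂p/∂xᵢ = 0 for i = 1,2,3. Then for every c ∈ ℝ, the integral over the horizontal plane {x₃ = c} of v¹v³ dx₁dx₂ equals 0. -/
open MeasureTheory

/-- Partial derivative of a scalar function on `ℝ³` in the `i`-th coordinate direction. -/
noncomputable def pd (f : (Fin 3 → ℝ) → ℝ) (i : Fin 3) (x : Fin 3 → ℝ) : ℝ :=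
  fderiv ℝ f x (Pi.single i 1)

namespace Stmt0Aux

lemma pd_cont {f : (Fin 3 → ℝ) → ℝ} (hf : ContDiff ℝ (⊤ : ℕ∞) f) (i : Fin 3) :
    Continuous (pd f i) :=
  (hf.continuous_fderiv (by simp)).clm_apply continuous_const

lemma pd_cs {f : (Fin 3 → ℝ) → ℝ} (hfs : HasCompactSupport f) (i : Fin 3) :
    HasCompactSupport (pd f i) :=
  (hfs.fderiv ℝ).comp_left (g := fun L : (Fin 3 → ℝ) →L[ℝ] ℝ => L (Pi.single i 1)) rfl

lemma cs_comp {E : Type*} [NormedAddCommGroup E] [ProperSpace E]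
    {f : (Fin 3 → ℝ) → ℝ} (hfs : HasCompactSupport f)
    (m : E → Fin 3 → ℝ) (hm : ∀ z : E, ‖z‖ ≤ ‖m z‖) :
    HasCompactSupport (fun z => f (m z)) := by
  obtain ⟨R, hR⟩ := hfs.isBounded.subset_closedBall 0
  apply HasCompactSupport.intro (isCompact_closedBall (0 : E) R)
  intro z hz
  by_contra h
  have h1 : m z ∈ tsupport f := subset_tsupport f h
  have h2 : ‖m z‖ ≤ R := by simpa [Metric.mem_closedBall, dist_zero_right] using hR h1
  refine hz ?_
  simp only [Metric.mem_closedBall, dist_zero_right]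
  linarith [hm z]

lemma curve0 (a b : ℝ) : (∀ t : ℝ, HasDerivAt (fun t => (![t, a, b] : Fin 3 → ℝ)) (Pi.single 0 1) t)
    ∧ ContDiff ℝ (⊤ : ℕ∞) (fun t : ℝ => (![t, a, b] : Fin 3 → ℝ)) := by
  constructor
  · intro t
    rw [hasDerivAt_pi]
    intro i
    fin_cases i <;> simp [Pi.single, Function.update] <;>
      first | exact hasDerivAt_id t | exact hasDerivAt_const t _
  · rw [contDiff_pi]
    intro i
    fin_cases i <;> simp <;> first | exact contDiff_id | exact contDiff_const

lemma curve1 (a b : ℝ) : (∀ t : ℝ, HasDerivAt (fun t => (![a, t, b] : Fin 3 → ℝ)) (Pi.single 1 1) t)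
    ∧ ContDiff ℝ (⊤ : ℕ∞) (fun t : ℝ => (![a, t, b] : Fin 3 → ℝ)) := by
  constructor
  · intro t
    rw [hasDerivAt_pi]
    intro i
    fin_cases i <;> simp [Pi.single, Function.update] <;>
      first | exact hasDerivAt_id t | exact hasDerivAt_const t _
  · rw [contDiff_pi]
    intro i
    fin_cases i <;> simp <;> first | exact contDiff_id | exact contDiff_const

lemma curve2 (a b : ℝ) : (∀ t : ℝ, HasDerivAt (fun t => (![a, b, t] : Fin 3 → ℝ)) (Pi.single 2 1) t)
    ∧ ContDiff ℝ (⊤ : ℕ∞) (fun t : ℝ => (![a, b, t] : Fin 3 → ℝ)) := by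
  constructor
  · intro t
    rw [hasDerivAt_pi]
    intro i
    fin_cases i <;> simp [Pi.single, Function.update] <;>
      first | exact hasDerivAt_id t | exact hasDerivAt_const t _
  · rw [contDiff_pi]
    intro i
    fin_cases i <;> simp <;> first | exact contDiff_id | exact contDiff_const

lemma chain {f : (Fin 3 → ℝ) → ℝ} (hf : ContDiff ℝ (⊤ : ℕ∞) f) (i : Fin 3)
    {γ : ℝ → Fin 3 → ℝ} (hγ : ∀ t, HasDerivAt γ (Pi.single i 1) t) (t : ℝ) :
    HasDerivAt (fun s => f (γ s)) (pd f i (γ t)) t :=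
  ((hf.differentiable (by simp) (γ t)).hasFDerivAt).comp_hasDerivAt t (hγ t)

lemma integral_deriv_zero {φ : ℝ → ℝ} (hφ : ContDiff ℝ 1 φ) (hs : HasCompactSupport φ) :
    ∫ t : ℝ, deriv φ t = 0 := by
  have hint : Integrable (deriv φ) :=
    ((hφ.continuous_deriv le_rfl).integrable_of_hasCompactSupport hs.deriv)
  have h1 := hs.integral_Iic_deriv_eq hφ 0
  have h2 := hs.integral_Ioi_deriv_eq hφ 0
  have h3 := integral_add_compl (measurableSet_Iic (a := (0:ℝ))) hint
  rw [Set.compl_Iic] at h3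
  rw [← h3, h1, h2]; ring

lemma line_int_zero {f : (Fin 3 → ℝ) → ℝ} (hf : ContDiff ℝ (⊤ : ℕ∞) f)
    (i : Fin 3) {γ : ℝ → Fin 3 → ℝ}
    (hγd : ∀ t, HasDerivAt γ (Pi.single i 1) t) (hγ : ContDiff ℝ (⊤ : ℕ∞) γ)
    (hcs : HasCompactSupport (fun t => f (γ t))) :
    ∫ t : ℝ, pd f i (γ t) = 0 := by
  have hψ : ContDiff ℝ 1 (fun t => f (γ t)) := (hf.comp hγ).of_le (by simp)
  have hd : ∀ t : ℝ, deriv (fun s => f (γ s)) t = pd f i (γ t) :=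
    fun t => (chain hf i hγd t).deriv
  rw [show (fun t : ℝ => pd f i (γ t)) = deriv (fun s => f (γ s)) from funext fun t => (hd t).symm]
  exact integral_deriv_zero hψ hcs

lemma norm_line0 (a b t : ℝ) : ‖t‖ ≤ ‖(![t, a, b] : Fin 3 → ℝ)‖ := by
  simpa using norm_le_pi_norm (![t, a, b] : Fin 3 → ℝ) 0

lemma norm_line1 (a b t : ℝ) : ‖t‖ ≤ ‖(![a, t, b] : Fin 3 → ℝ)‖ := by
  simpa using norm_le_pi_norm (![a, t, b] : Fin 3 → ℝ) 1

lemma norm_line2 (a b t : ℝ) : ‖t‖ ≤ ‖(![a, b, t] : Fin 3 → ℝ)‖ := by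
  simpa using norm_le_pi_norm (![a, b, t] : Fin 3 → ℝ) 2

lemma norm_plane (c : ℝ) (q : ℝ × ℝ) : ‖q‖ ≤ ‖(![q.1, q.2, c] : Fin 3 → ℝ)‖ := by
  have h0 := norm_le_pi_norm (![q.1, q.2, c] : Fin 3 → ℝ) 0
  have h1 := norm_le_pi_norm (![q.1, q.2, c] : Fin 3 → ℝ) 1
  simp only [Matrix.cons_val_zero, Matrix.cons_val_one, Matrix.head_cons] at h0 h1
  rw [Prod.norm_def]
  exact max_le h0 h1

lemma norm_cube (z : (ℝ × ℝ) × ℝ) : ‖z‖ ≤ ‖(![z.1.1, z.1.2, z.2] : Fin 3 → ℝ)‖ := by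
  have h0 := norm_le_pi_norm (![z.1.1, z.1.2, z.2] : Fin 3 → ℝ) 0
  have h1 := norm_le_pi_norm (![z.1.1, z.1.2, z.2] : Fin 3 → ℝ) 1
  have h2 := norm_le_pi_norm (![z.1.1, z.1.2, z.2] : Fin 3 → ℝ) 2
  simp only [Matrix.cons_val_zero, Matrix.cons_val_one, Matrix.head_cons] at h0 h1 h2
  rw [Prod.norm_def, Prod.norm_def]
  exact max_le (max_le h0 h1) (by simpa using h2)

lemma cont_plane (c : ℝ) : Continuous (fun q : ℝ × ℝ => (![q.1, q.2, c] : Fin 3 → ℝ)) := by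
  apply continuous_pi
  intro i
  fin_cases i <;> simp <;>
    first | exact continuous_fst | exact continuous_snd | exact continuous_const

lemma cont_cube : Continuous (fun z : (ℝ × ℝ) × ℝ => (![z.1.1, z.1.2, z.2] : Fin 3 → ℝ)) := by
  apply continuous_pi
  intro i
  fin_cases i <;> simp <;>
    first | exact continuous_fst.fst | exact continuous_fst.snd | exact continuous_snd

/-- integral over the horizontal plane of a ∂₁-derivative vanishes. -/
lemma plane_int_zero0 {f : (Fin 3 → ℝ) → ℝ} (hf : ContDiff ℝ (⊤ : ℕ∞) f)
    (hfs : HasCompactSupport f) (c : ℝ) :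
    ∫ q : ℝ × ℝ, pd f 0 ![q.1, q.2, c] = 0 := by
  have hG : Integrable (fun q : ℝ × ℝ => pd f 0 ![q.1, q.2, c]) :=
    ((pd_cont hf 0).comp (cont_plane c)).integrable_of_hasCompactSupport
      (cs_comp (pd_cs hfs 0) _ (norm_plane c))
  rw [Measure.volume_eq_prod] at hG ⊢
  rw [integral_prod_symm _ hG]
  have : ∀ y : ℝ, ∫ x : ℝ, pd f 0 ![x, y, c] = 0 := fun y =>
    line_int_zero hf 0 (curve0 y c).1 (curve0 y c).2
      (cs_comp hfs _ (norm_line0 y c))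
  simp only [this, integral_zero]

lemma plane_int_zero1 {f : (Fin 3 → ℝ) → ℝ} (hf : ContDiff ℝ (⊤ : ℕ∞) f)
    (hfs : HasCompactSupport f) (c : ℝ) :
    ∫ q : ℝ × ℝ, pd f 1 ![q.1, q.2, c] = 0 := by
  have hG : Integrable (fun q : ℝ × ℝ => pd f 1 ![q.1, q.2, c]) :=
    ((pd_cont hf 1).comp (cont_plane c)).integrable_of_hasCompactSupport
      (cs_comp (pd_cs hfs 1) _ (norm_plane c))
  rw [Measure.volume_eq_prod] at hG ⊢
  rw [integral_prod _ hG]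
  have : ∀ x : ℝ, ∫ y : ℝ, pd f 1 ![x, y, c] = 0 := fun x =>
    line_int_zero hf 1 (curve1 x c).1 (curve1 x c).2
      (cs_comp hfs _ (norm_line1 x c))
  simp only [this, integral_zero]

end Stmt0Aux


open Stmt0Aux in
theorem stmt0
    (v : (Fin 3 → ℝ) → (Fin 3 → ℝ)) (p : (Fin 3 → ℝ) → ℝ)
    (hv : ContDiff ℝ (⊤ : ℕ∞) v) (hp : ContDiff ℝ (⊤ : ℕ∞) p)
    (hvs : HasCompactSupport v) (hps : HasCompactSupport p)
    (euler : ∀ (x : Fin 3 → ℝ) (i : Fin 3),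
      (∑ j : Fin 3, pd (fun y => v y i * v y j) j x) + pd p i x = 0) :
    ∀ c : ℝ, ∫ q : ℝ × ℝ, v ![q.1, q.2, c] 0 * v ![q.1, q.2, c] 2 = 0 := by
  intro c
  have hvc : ∀ i : Fin 3, ContDiff ℝ (⊤ : ℕ∞) (fun y => v y i) := fun i => contDiff_pi.1 hv i
  have hvcs : ∀ i : Fin 3, HasCompactSupport (fun y => v y i) := fun i =>
    hvs.comp_left (g := fun w : Fin 3 → ℝ => w i) rfl
  have hA : ContDiff ℝ (⊤ : ℕ∞) (fun y => v y 0 * v y 0) := (hvc 0).mul (hvc 0)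
  have hAcs : HasCompactSupport (fun y => v y 0 * v y 0) := (hvcs 0).mul_right
  have hB : ContDiff ℝ (⊤ : ℕ∞) (fun y => v y 0 * v y 1) := (hvc 0).mul (hvc 1)
  have hBcs : HasCompactSupport (fun y => v y 0 * v y 1) := (hvcs 0).mul_right
  have hhC : ContDiff ℝ (⊤ : ℕ∞) (fun y => v y 0 * v y 2) := (hvc 0).mul (hvc 2)
  have hhcs : HasCompactSupport (fun y => v y 0 * v y 2) := (hvcs 0).mul_right
  have keyEq : ∀ x, pd (fun y => v y 0 * v y 2) 2 x =
      -(pd (fun y => v y 0 * v y 0) 0 x + pd (fun y => v y 0 * v y 1) 1 x + pd p 0 x) := by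
    intro x
    have h := euler x 0
    rw [Fin.sum_univ_three] at h
    linarith
  have integ : ∀ (f : (Fin 3 → ℝ) → ℝ), ContDiff ℝ (⊤ : ℕ∞) f → HasCompactSupport f →
      ∀ (i : Fin 3) (t : ℝ), Integrable (fun q : ℝ × ℝ => pd f i ![q.1, q.2, t]) :=
    fun f hf hfs i t =>
      ((pd_cont hf i).comp (cont_plane t)).integrable_of_hasCompactSupport
        (cs_comp (pd_cs hfs i) _ (norm_plane t))
  have sliceZero : ∀ t : ℝ, ∫ q : ℝ × ℝ, pd (fun y => v y 0 * v y 2) 2 ![q.1, q.2, t] = 0 := by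
    intro t
    have e1 := plane_int_zero0 hA hAcs t
    have e2 := plane_int_zero1 hB hBcs t
    have e3 := plane_int_zero0 hp hps t
    rw [show (fun q : ℝ × ℝ => pd (fun y => v y 0 * v y 2) 2 ![q.1, q.2, t]) =
        fun q : ℝ × ℝ => -(pd (fun y => v y 0 * v y 0) 0 ![q.1, q.2, t] +
          pd (fun y => v y 0 * v y 1) 1 ![q.1, q.2, t] + pd p 0 ![q.1, q.2, t]) from
      funext fun q => keyEq _]
    have ia := integ _ hA hAcs 0 t
    have ib := integ _ hB hBcs 1 t
    have ip := integ _ hp hps 0 t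
    have iab : Integrable (fun q : ℝ × ℝ => pd (fun y => v y 0 * v y 0) 0 ![q.1, q.2, t] +
        pd (fun y => v y 0 * v y 1) 1 ![q.1, q.2, t]) := ia.add ib
    rw [integral_neg, integral_add iab ip, integral_add ia ib, e1, e2, e3]
    ring
  have rep : ∀ q : ℝ × ℝ, v ![q.1, q.2, c] 0 * v ![q.1, q.2, c] 2 =
      -∫ t in Set.Ioi c, pd (fun y => v y 0 * v y 2) 2 ![q.1, q.2, t] := by
    intro q
    have hder : ∀ t ∈ Set.Ici c,
        HasDerivAt (fun s => v ![q.1, q.2, s] 0 * v ![q.1, q.2, s] 2)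
          (pd (fun y => v y 0 * v y 2) 2 ![q.1, q.2, t]) t :=
      fun t _ => chain hhC 2 (curve2 q.1 q.2).1 t
    have hint : IntegrableOn (fun t => pd (fun y => v y 0 * v y 2) 2 ![q.1, q.2, t])
        (Set.Ioi c) := by
      apply Integrable.integrableOn
      exact ((pd_cont hhC 2).comp (curve2 q.1 q.2).2.continuous).integrable_of_hasCompactSupport
        (cs_comp (pd_cs hhcs 2) _ (norm_line2 q.1 q.2))
    have htend : Filter.Tendsto (fun s => v ![q.1, q.2, s] 0 * v ![q.1, q.2, s] 2)
        Filter.atTop (nhds 0) := by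
      obtain ⟨R, hR⟩ := hhcs.isBounded.subset_closedBall 0
      have hev : ∀ᶠ s in Filter.atTop, v ![q.1, q.2, s] 0 * v ![q.1, q.2, s] 2 = 0 := by
        filter_upwards [Filter.eventually_gt_atTop (max R 0)] with s hs
        have hns : R < ‖s‖ := lt_of_lt_of_le (lt_of_le_of_lt (le_max_left R 0) hs)
          (le_abs_self s)
        have hnorm : R < ‖(![q.1, q.2, s] : Fin 3 → ℝ)‖ :=
          lt_of_lt_of_le hns (norm_line2 q.1 q.2 s)
        have : (![q.1, q.2, s] : Fin 3 → ℝ) ∉ tsupport (fun y => v y 0 * v y 2) := by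
          intro hmem
          have := hR hmem
          simp only [Metric.mem_closedBall, dist_zero_right] at this
          linarith
        exact image_eq_zero_of_notMem_tsupport (f := fun y => v y 0 * v y 2) this
      exact Filter.Tendsto.congr' (hev.mono fun s h => h.symm) tendsto_const_nhds
    have key := integral_Ioi_of_hasDerivAt_of_tendsto' hder hint htend
    rw [key]
    ring
  have hfull : Integrable (fun z : (ℝ × ℝ) × ℝ =>
      pd (fun y => v y 0 * v y 2) 2 ![z.1.1, z.1.2, z.2]) :=
    ((pd_cont hhC 2).comp cont_cube).integrable_of_hasCompactSupport
      (cs_comp (pd_cs hhcs 2) _ norm_cube)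
  have hswap : Integrable
      (Function.uncurry fun (q : ℝ × ℝ) (t : ℝ) =>
        pd (fun y => v y 0 * v y 2) 2 ![q.1, q.2, t])
      ((volume : Measure (ℝ × ℝ)).prod (volume.restrict (Set.Ioi c))) := by
    rw [show (volume : Measure (ℝ × ℝ)).prod (volume.restrict (Set.Ioi c)) =
        ((volume : Measure (ℝ × ℝ)).prod volume).restrict (Set.univ ×ˢ Set.Ioi c) from by
      rw [← Measure.prod_restrict, Measure.restrict_univ]]
    rw [← Measure.volume_eq_prod]
    exact hfull.restrict
  calc ∫ q : ℝ × ℝ, v ![q.1, q.2, c] 0 * v ![q.1, q.2, c] 2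
      = ∫ q : ℝ × ℝ, -∫ t in Set.Ioi c, pd (fun y => v y 0 * v y 2) 2 ![q.1, q.2, t] := by
        exact integral_congr_ae (Filter.Eventually.of_forall rep)
    _ = -∫ q : ℝ × ℝ, ∫ t in Set.Ioi c, pd (fun y => v y 0 * v y 2) 2 ![q.1, q.2, t] := by
        rw [integral_neg]
    _ = -∫ t in Set.Ioi c, ∫ q : ℝ × ℝ, pd (fun y => v y 0 * v y 2) 2 ![q.1, q.2, t] := by
        rw [integral_integral_swap hswap]
    _ = 0 := by
        simp only [sliceZero, integral_zero, neg_zero]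
end

section
/- Let v : ℝ³ → ℝ³ and p : ℝ³ → ℝ be smooth compactly supported solutions of the steady Euler momentum equations. Then for any affine plane L ⊂ ℝ³ with unit normal ν_L and any vector z parallel to L, the integral ∫_L ⟨v, z⟩⟨v, ν_L⟩ dσ_L equals 0. -/
open MeasureTheory

section helpers
open Filter Set Topology Matrix

/-- Euclidean dot product on `ℝ³`. -/
def dot3 (a b : Fin 3 → ℝ) : ℝ := ∑ i, a i * b i

/-- The momentum-flux tensor contracted with `z`, a vector field on `ℝ³`. -/
noncomputable def Wf (v : (Fin 3 → ℝ) → (Fin 3 → ℝ)) (p : (Fin 3 → ℝ) → ℝ)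
    (z : Fin 3 → ℝ) (x : Fin 3 → ℝ) (j : Fin 3) : ℝ :=
  dot3 (v x) z * v x j + p x * z j

/-- `Wf` dotted with a direction `u`. -/
noncomputable def gdir (v : (Fin 3 → ℝ) → (Fin 3 → ℝ)) (p : (Fin 3 → ℝ) → ℝ)
    (z u : Fin 3 → ℝ) (x : Fin 3 → ℝ) : ℝ :=
  dot3 (Wf v p z x) u

/-- Directional derivative of `gdir` in the direction `u`. -/
noncomputable def Ddir (v : (Fin 3 → ℝ) → (Fin 3 → ℝ)) (p : (Fin 3 → ℝ) → ℝ)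
    (z u : Fin 3 → ℝ) (x : Fin 3 → ℝ) : ℝ :=
  fderiv ℝ (gdir v p z u) x u

/-- Affine parametrization of `ℝ³` adapted to the plane. -/
def planeMap (x₀ ν e f : Fin 3 → ℝ) (r s t : ℝ) : Fin 3 → ℝ :=
  x₀ + r • ν + s • e + t • f

lemma clm_apply_eq_sum (L : (Fin 3 → ℝ) →L[ℝ] ℝ) (u : Fin 3 → ℝ) :
    L u = ∑ i, u i * L (Pi.single i 1) := by
  have h : u = ∑ i, u i • (Pi.single i 1 : Fin 3 → ℝ) := by
    funext j
    simp [Finset.sum_apply, Pi.single_apply]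
  calc L u = L (∑ i, u i • (Pi.single i 1 : Fin 3 → ℝ)) := by rw [← h]
    _ = ∑ i, u i * L (Pi.single i 1) := by simp [smul_eq_mul]

lemma hcs_comp_section {α : Type*} [TopologicalSpace α] [T2Space α]
    (G : (Fin 3 → ℝ) → ℝ) (hG : HasCompactSupport G)
    (T : α → (Fin 3 → ℝ)) (S : (Fin 3 → ℝ) → α) (hS : Continuous S)
    (hST : ∀ a, S (T a) = a) : HasCompactSupport (fun a => G (T a)) := by
  apply HasCompactSupport.intro (hG.image hS)
  intro a ha
  by_contra hGa
  exact ha ⟨T a, subset_tsupport G hGa, hST a⟩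

lemma integral_line_deriv_zero (f f' : ℝ → ℝ) (hd : ∀ x, HasDerivAt f (f' x) x)
    (hf' : Integrable f') (hcs : HasCompactSupport f) : ∫ x, f' x = 0 := by
  rw [hasCompactSupport_iff_eventuallyEq, Filter.coclosedCompact_eq_cocompact] at hcs
  have hbot : Tendsto f atBot (𝓝 0) := (hcs.filter_mono atBot_le_cocompact).tendsto
  have htop : Tendsto f atTop (𝓝 0) := (hcs.filter_mono atTop_le_cocompact).tendsto
  rw [integral_of_hasDerivAt_of_tendsto hd hf' hbot htop, sub_zero]

lemma integral_Iic_deriv' (f f' : ℝ → ℝ) (a : ℝ) (hd : ∀ x, HasDerivAt f (f' x) x)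
    (hf' : IntegrableOn f' (Iic a)) (hcs : HasCompactSupport f) :
    ∫ x in Iic a, f' x = f a := by
  rw [hasCompactSupport_iff_eventuallyEq, Filter.coclosedCompact_eq_cocompact] at hcs
  have hbot : Tendsto f atBot (𝓝 0) := (hcs.filter_mono atBot_le_cocompact).tendsto
  rw [integral_Iic_of_hasDerivAt_of_tendsto' (fun x _ => hd x) hf' hbot, sub_zero]

lemma hasDerivAt_comp_line (G : (Fin 3 → ℝ) → ℝ) (hG : ContDiff ℝ (⊤ : ℕ∞) G)
    (c w : Fin 3 → ℝ) (r : ℝ) :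
    HasDerivAt (fun r : ℝ => G (c + r • w)) (fderiv ℝ G (c + r • w) w) r := by
  have h1 : HasDerivAt (fun r : ℝ => c + r • w) w r := by
    simpa using ((hasDerivAt_id r).smul_const w).const_add c
  have h2 := (hG.differentiable (by simp) (c + r • w)).hasFDerivAt
  exact h2.comp_hasDerivAt r h1

section alg
variable {v : (Fin 3 → ℝ) → (Fin 3 → ℝ)} {p : (Fin 3 → ℝ) → ℝ} {z u : Fin 3 → ℝ}

lemma contDiff_vj (v : (Fin 3 → ℝ) → (Fin 3 → ℝ)) (hv : ContDiff ℝ (⊤ : ℕ∞) v) (j : Fin 3) :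
    ContDiff ℝ (⊤ : ℕ∞) (fun y => v y j) := contDiff_pi.mp hv j

lemma contDiff_Wfj (hv : ContDiff ℝ (⊤ : ℕ∞) v) (hp : ContDiff ℝ (⊤ : ℕ∞) p) (j : Fin 3) :
    ContDiff ℝ (⊤ : ℕ∞) (fun y => Wf v p z y j) := by
  unfold Wf dot3
  exact ((ContDiff.sum fun i _ => (contDiff_vj v hv i).mul contDiff_const).mul
    (contDiff_vj v hv j)).add (hp.mul contDiff_const)

lemma contDiff_gdir (hv : ContDiff ℝ (⊤ : ℕ∞) v) (hp : ContDiff ℝ (⊤ : ℕ∞) p) :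
    ContDiff ℝ (⊤ : ℕ∞) (gdir v p z u) := by
  unfold gdir dot3
  exact ContDiff.sum fun j _ => (contDiff_Wfj hv hp j).mul contDiff_const

lemma cont_Ddir (hv : ContDiff ℝ (⊤ : ℕ∞) v) (hp : ContDiff ℝ (⊤ : ℕ∞) p) :
    Continuous (Ddir v p z u) := by
  unfold Ddir
  exact ((contDiff_gdir hv hp).continuous_fderiv (by simp)).clm_apply continuous_const

lemma hcs_gdir (hvs : HasCompactSupport v) (hps : HasCompactSupport p) :
    HasCompactSupport (gdir v p z u) := by
  apply HasCompactSupport.intro (hvs.isCompact.union hps.isCompact)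
  intro x hx
  simp only [Set.mem_union, not_or] at hx
  have hvx : v x = 0 := image_eq_zero_of_notMem_tsupport hx.1
  have hpx : p x = 0 := image_eq_zero_of_notMem_tsupport hx.2
  simp [gdir, Wf, dot3, hvx, hpx]

lemma hcs_Ddir (hvs : HasCompactSupport v) (hps : HasCompactSupport p) :
    HasCompactSupport (Ddir v p z u) := by
  have h := (hcs_gdir hvs hps (z := z) (u := u)).fderiv (𝕜 := ℝ)
  apply HasCompactSupport.intro h.isCompact
  intro x hx
  have : fderiv ℝ (gdir v p z u) x = 0 := image_eq_zero_of_notMem_tsupport hx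
  simp [Ddir, this]

lemma fderiv_gdir_apply (hv : ContDiff ℝ (⊤ : ℕ∞) v) (hp : ContDiff ℝ (⊤ : ℕ∞) p) (u u' x : Fin 3 → ℝ) :
    fderiv ℝ (gdir v p z u) x u' =
      ∑ j, ∑ i, u j * (u' i * fderiv ℝ (fun y => Wf v p z y j) x (Pi.single i 1)) := by
  have hdiff : ∀ j : Fin 3, DifferentiableAt ℝ (fun y => Wf v p z y j) x :=
    fun j => (contDiff_Wfj hv hp j).differentiable (by simp) x
  have hg : gdir v p z u = fun y => ∑ j, Wf v p z y j * u j := by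
    funext y; rfl
  rw [hg, fderiv_fun_sum (fun j _ => (hdiff j).mul_const (u j))]
  rw [ContinuousLinearMap.sum_apply]
  refine Finset.sum_congr rfl fun j _ => ?_
  rw [fderiv_mul_const (hdiff j)]
  rw [ContinuousLinearMap.coe_smul', Pi.smul_apply, smul_eq_mul,
    clm_apply_eq_sum (fderiv ℝ (fun y => Wf v p z y j) x) u', Finset.mul_sum]

lemma sum_diag_zero (hv : ContDiff ℝ (⊤ : ℕ∞) v) (hp : ContDiff ℝ (⊤ : ℕ∞) p)
    (euler : ∀ (x : Fin 3 → ℝ) (i : Fin 3),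
      (∑ j : Fin 3, pd (fun y => v y i * v y j) j x) + pd p i x = 0)
    (x : Fin 3 → ℝ) :
    ∑ i : Fin 3, fderiv ℝ (fun y => Wf v p z y i) x (Pi.single i 1) = 0 := by
  have hstep : ∀ i : Fin 3, fderiv ℝ (fun y => Wf v p z y i) x (Pi.single i 1) =
      (∑ k, z k * pd (fun y => v y k * v y i) i x) + z i * pd p i x := by
    intro i
    have hWf : (fun y => Wf v p z y i) =
        fun y => (∑ k, z k * (v y k * v y i)) + p y * z i := by
      funext y
      simp only [Wf, dot3, Finset.sum_mul]
      congr 1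
      exact Finset.sum_congr rfl fun k _ => by ring
    have hdv : ∀ k : Fin 3, DifferentiableAt ℝ (fun y => v y k * v y i) x :=
      fun k => ((contDiff_vj v hv k).mul (contDiff_vj v hv i)).differentiable (by simp) x
    have hds : DifferentiableAt ℝ (fun y => ∑ k, z k * (v y k * v y i)) x :=
      DifferentiableAt.fun_sum fun k _ => (hdv k).const_mul (z k)
    have hdp : DifferentiableAt ℝ p x := hp.differentiable (by simp) x
    rw [hWf, fderiv_fun_add hds (hdp.mul_const (z i))]
    rw [ContinuousLinearMap.add_apply]
    congr 1
    · rw [fderiv_fun_sum (fun k _ => (hdv k).const_mul (z k)), ContinuousLinearMap.sum_apply]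
      refine Finset.sum_congr rfl fun k _ => ?_
      rw [fderiv_const_mul (hdv k)]
      simp [pd]
    · rw [fderiv_mul_const hdp]
      simp [pd, mul_comm]
  calc ∑ i : Fin 3, fderiv ℝ (fun y => Wf v p z y i) x (Pi.single i 1)
      = ∑ i : Fin 3, ((∑ k, z k * pd (fun y => v y k * v y i) i x) + z i * pd p i x) :=
        Finset.sum_congr rfl fun i _ => hstep i
    _ = (∑ k : Fin 3, z k * ∑ i, pd (fun y => v y k * v y i) i x) +
        ∑ i : Fin 3, z i * pd p i x := by
        rw [Finset.sum_add_distrib, Finset.sum_comm]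
        congr 1
        exact Finset.sum_congr rfl fun k _ => by rw [Finset.mul_sum]
    _ = 0 := by
        have : ∀ k : Fin 3, ∑ i, pd (fun y => v y k * v y i) i x = -pd p k x := by
          intro k
          have := euler x k
          linarith
        simp only [this]
        simp [Finset.sum_congr, mul_neg]

lemma frame_identity {ν e f : Fin 3 → ℝ}
    (hν : dot3 ν ν = 1) (he : dot3 e e = 1) (hf : dot3 f f = 1)
    (hef : dot3 e f = 0) (heν : dot3 e ν = 0) (hfν : dot3 f ν = 0)
    (i j : Fin 3) :
    e i * e j + f i * f j + ν i * ν j = if i = j then 1 else 0 := by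
  have hν' : ν 0 * ν 0 + ν 1 * ν 1 + ν 2 * ν 2 = 1 := by
    simpa [dot3, Fin.sum_univ_three] using hν
  have he' : e 0 * e 0 + e 1 * e 1 + e 2 * e 2 = 1 := by
    simpa [dot3, Fin.sum_univ_three] using he
  have hf' : f 0 * f 0 + f 1 * f 1 + f 2 * f 2 = 1 := by
    simpa [dot3, Fin.sum_univ_three] using hf
  have hef' : e 0 * f 0 + e 1 * f 1 + e 2 * f 2 = 0 := by
    simpa [dot3, Fin.sum_univ_three] using hef
  have heν' : e 0 * ν 0 + e 1 * ν 1 + e 2 * ν 2 = 0 := by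
    simpa [dot3, Fin.sum_univ_three] using heν
  have hfν' : f 0 * ν 0 + f 1 * ν 1 + f 2 * ν 2 = 0 := by
    simpa [dot3, Fin.sum_univ_three] using hfν
  have r0 : (![e,f,ν] : Fin 3 → Fin 3 → ℝ) 0 = e := rfl
  have r1 : (![e,f,ν] : Fin 3 → Fin 3 → ℝ) 1 = f := rfl
  have r2 : (![e,f,ν] : Fin 3 → Fin 3 → ℝ) 2 = ν := rfl
  have hM : (Matrix.of ![e,f,ν]) * (Matrix.of ![e,f,ν])ᵀ = 1 := by
    ext a b
    rw [Matrix.mul_apply, Fin.sum_univ_three]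
    simp only [Matrix.transpose_apply, Matrix.of_apply, r0, r1, r2]
    fin_cases a <;> fin_cases b <;> simp [Matrix.one_apply, r0, r1, r2] <;>
      first
        | linear_combination he' | linear_combination hf' | linear_combination hν'
        | linear_combination hef' | linear_combination heν' | linear_combination hfν'
  have hMT : (Matrix.of ![e,f,ν])ᵀ * (Matrix.of ![e,f,ν]) = 1 := mul_eq_one_comm.mp hM
  have h2 : ((Matrix.of ![e,f,ν])ᵀ * (Matrix.of ![e,f,ν])) i j
      = (1 : Matrix (Fin 3) (Fin 3) ℝ) i j := by rw [hMT]
  have h3 : ((Matrix.of ![e,f,ν])ᵀ * (Matrix.of ![e,f,ν])) i j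
      = e i * e j + f i * f j + ν i * ν j := by
    rw [Matrix.mul_apply, Fin.sum_univ_three]
    simp only [Matrix.transpose_apply, Matrix.of_apply, r0, r1, r2]
  rw [h3] at h2
  rw [h2, Matrix.one_apply]

lemma Ddir_sum_zero (hv : ContDiff ℝ (⊤ : ℕ∞) v) (hp : ContDiff ℝ (⊤ : ℕ∞) p)
    (euler : ∀ (x : Fin 3 → ℝ) (i : Fin 3),
      (∑ j : Fin 3, pd (fun y => v y i * v y j) j x) + pd p i x = 0)
    {ν e f : Fin 3 → ℝ}
    (hν : dot3 ν ν = 1) (he : dot3 e e = 1) (hf : dot3 f f = 1)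
    (hef : dot3 e f = 0) (heν : dot3 e ν = 0) (hfν : dot3 f ν = 0)
    (x : Fin 3 → ℝ) :
    Ddir v p z ν x + Ddir v p z e x + Ddir v p z f x = 0 := by
  have hfr := frame_identity hν he hf hef heν hfν
  calc Ddir v p z ν x + Ddir v p z e x + Ddir v p z f x
      = ∑ j, ∑ i, (e j * e i + f j * f i + ν j * ν i) *
          fderiv ℝ (fun y => Wf v p z y j) x (Pi.single i 1) := by
        unfold Ddir
        rw [fderiv_gdir_apply hv hp, fderiv_gdir_apply hv hp, fderiv_gdir_apply hv hp]
        rw [← Finset.sum_add_distrib, ← Finset.sum_add_distrib]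
        refine Finset.sum_congr rfl fun j _ => ?_
        rw [← Finset.sum_add_distrib, ← Finset.sum_add_distrib]
        exact Finset.sum_congr rfl fun i _ => by ring
    _ = ∑ j, ∑ i, (if j = i then 1 else 0) *
          fderiv ℝ (fun y => Wf v p z y j) x (Pi.single i 1) := by
        refine Finset.sum_congr rfl fun j _ => Finset.sum_congr rfl fun i _ => ?_
        rw [hfr j i]
    _ = ∑ j : Fin 3, fderiv ℝ (fun y => Wf v p z y j) x (Pi.single j 1) := by
        refine Finset.sum_congr rfl fun j _ => ?_
        simp
    _ = 0 := sum_diag_zero hv hp euler x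
end alg

lemma dot3_planeMap (x₀ ν e f w : Fin 3 → ℝ) (r s t : ℝ) :
    dot3 (planeMap x₀ ν e f r s t - x₀) w =
      r * dot3 ν w + s * dot3 e w + t * dot3 f w := by
  simp only [planeMap, dot3, Fin.sum_univ_three, Pi.add_apply, Pi.sub_apply,
    Pi.smul_apply, smul_eq_mul]
  ring

lemma dot3_comm (a b : Fin 3 → ℝ) : dot3 a b = dot3 b a := by
  simp [dot3, mul_comm]

lemma cont_dot3_sub (x₀ u : Fin 3 → ℝ) :
    Continuous fun x : Fin 3 → ℝ => dot3 (x - x₀) u := by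
  unfold dot3
  exact continuous_finset_sum _ fun i _ =>
    (((continuous_apply i).sub continuous_const).mul continuous_const)

lemma cont_comp_planeMap {α : Type*} [TopologicalSpace α] (x₀ ν e f : Fin 3 → ℝ)
    (G : (Fin 3 → ℝ) → ℝ) (hG : Continuous G) (R S T : α → ℝ)
    (hR : Continuous R) (hS : Continuous S) (hT : Continuous T) :
    Continuous fun a => G (planeMap x₀ ν e f (R a) (S a) (T a)) := by
  apply hG.comp
  unfold planeMap
  fun_prop

lemma planeMap_rearr_r (x₀ ν e f : Fin 3 → ℝ) (r s t : ℝ) :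
    planeMap x₀ ν e f r s t = (x₀ + s • e + t • f) + r • ν := by
  unfold planeMap; funext i
  simp only [Pi.add_apply, Pi.smul_apply, smul_eq_mul]; ring

lemma planeMap_rearr_s (x₀ ν e f : Fin 3 → ℝ) (r s t : ℝ) :
    planeMap x₀ ν e f r s t = (x₀ + r • ν + t • f) + s • e := by
  unfold planeMap; funext i
  simp only [Pi.add_apply, Pi.smul_apply, smul_eq_mul]; ring

lemma planeMap_rearr_t (x₀ ν e f : Fin 3 → ℝ) (r s t : ℝ) :
    planeMap x₀ ν e f r s t = (x₀ + r • ν + s • e) + t • f := rfl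

end helpers

open Filter Set Topology in
theorem stmt1
    (v : (Fin 3 → ℝ) → (Fin 3 → ℝ)) (p : (Fin 3 → ℝ) → ℝ)
    (hv : ContDiff ℝ (⊤ : ℕ∞) v) (hp : ContDiff ℝ (⊤ : ℕ∞) p)
    (hvs : HasCompactSupport v) (hps : HasCompactSupport p)
    (euler : ∀ (x : Fin 3 → ℝ) (i : Fin 3),
      (∑ j : Fin 3, pd (fun y => v y i * v y j) j x) + pd p i x = 0)
    -- an affine plane `L` through `x₀` with orthonormal basis `e, f` of its
    -- direction plane and unit normal `ν`
    (x₀ ν e f : Fin 3 → ℝ)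
    (hν : dot3 ν ν = 1) (he : dot3 e e = 1) (hf : dot3 f f = 1)
    (hef : dot3 e f = 0) (heν : dot3 e ν = 0) (hfν : dot3 f ν = 0)
    -- `z` is a vector parallel to `L`
    (z : Fin 3 → ℝ) (hz : dot3 z ν = 0) :
    ∫ q : ℝ × ℝ, dot3 (v (x₀ + q.1 • e + q.2 • f)) z *
      dot3 (v (x₀ + q.1 • e + q.2 • f)) ν = 0 := by
  have hz' : z 0 * ν 0 + z 1 * ν 1 + z 2 * ν 2 = 0 := by
    simpa [dot3, Fin.sum_univ_three] using hz
  -- coordinate recovery along the parametrization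
  have secν : ∀ r s t : ℝ, dot3 (planeMap x₀ ν e f r s t - x₀) ν = r := by
    intro r s t
    rw [dot3_planeMap, hν, heν, hfν]; ring
  have sece : ∀ r s t : ℝ, dot3 (planeMap x₀ ν e f r s t - x₀) e = s := by
    intro r s t
    rw [dot3_planeMap, dot3_comm ν e, heν, he, dot3_comm f e, hef]; ring
  have secf : ∀ r s t : ℝ, dot3 (planeMap x₀ ν e f r s t - x₀) f = t := by
    intro r s t
    rw [dot3_planeMap, dot3_comm ν f, hfν, hf, hef]; ring
  -- pointwise identity for the integrand
  have step0 : ∀ s t : ℝ,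
      dot3 (v (x₀ + s • e + t • f)) z * dot3 (v (x₀ + s • e + t • f)) ν
        = gdir v p z ν (planeMap x₀ ν e f 0 s t) := by
    intro s t
    have h0 : planeMap x₀ ν e f 0 s t = x₀ + s • e + t • f := by
      unfold planeMap
      funext i
      simp
    rw [h0]
    simp only [gdir, Wf, dot3, Fin.sum_univ_three]
    linear_combination (-(p (x₀ + s • e + t • f))) * hz'
  -- derivative identities along coordinate lines
  have hDerν : ∀ s t r : ℝ,
      HasDerivAt (fun r => gdir v p z ν (planeMap x₀ ν e f r s t))
        (Ddir v p z ν (planeMap x₀ ν e f r s t)) r := by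
    intro s t r
    have h := hasDerivAt_comp_line (gdir v p z ν) (contDiff_gdir hv hp)
      (x₀ + s • e + t • f) ν r
    simp only [← planeMap_rearr_r] at h
    exact h
  have hDere : ∀ r t s : ℝ,
      HasDerivAt (fun s => gdir v p z e (planeMap x₀ ν e f r s t))
        (Ddir v p z e (planeMap x₀ ν e f r s t)) s := by
    intro r t s
    have h := hasDerivAt_comp_line (gdir v p z e) (contDiff_gdir hv hp)
      (x₀ + r • ν + t • f) e s
    simp only [← planeMap_rearr_s] at h
    exact h
  have hDerf : ∀ r s t : ℝ,
      HasDerivAt (fun t => gdir v p z f (planeMap x₀ ν e f r s t))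
        (Ddir v p z f (planeMap x₀ ν e f r s t)) t := by
    intro r s t
    have h := hasDerivAt_comp_line (gdir v p z f) (contDiff_gdir hv hp)
      (x₀ + r • ν + s • e) f t
    simp only [← planeMap_rearr_t] at h
    exact h
  -- compact support / continuity / integrability of line slices
  have hcsGν : ∀ s t : ℝ, HasCompactSupport
      (fun r => gdir v p z ν (planeMap x₀ ν e f r s t)) := fun s t =>
    hcs_comp_section _ (hcs_gdir hvs hps) _ (fun x => dot3 (x - x₀) ν)
      (cont_dot3_sub x₀ ν) (fun r => secν r s t)
  have hcsGe : ∀ r t : ℝ, HasCompactSupport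
      (fun s => gdir v p z e (planeMap x₀ ν e f r s t)) := fun r t =>
    hcs_comp_section _ (hcs_gdir hvs hps) _ (fun x => dot3 (x - x₀) e)
      (cont_dot3_sub x₀ e) (fun s => sece r s t)
  have hcsGf : ∀ r s : ℝ, HasCompactSupport
      (fun t => gdir v p z f (planeMap x₀ ν e f r s t)) := fun r s =>
    hcs_comp_section _ (hcs_gdir hvs hps) _ (fun x => dot3 (x - x₀) f)
      (cont_dot3_sub x₀ f) (fun t => secf r s t)
  have hIntDν : ∀ s t : ℝ, Integrable
      (fun r => Ddir v p z ν (planeMap x₀ ν e f r s t)) := by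
    intro s t
    refine Continuous.integrable_of_hasCompactSupport ?_ ?_
    · exact cont_comp_planeMap x₀ ν e f _ (cont_Ddir hv hp) _ _ _
        continuous_id continuous_const continuous_const
    · exact hcs_comp_section _ (hcs_Ddir hvs hps) _ (fun x => dot3 (x - x₀) ν)
        (cont_dot3_sub x₀ ν) (fun r => secν r s t)
  have hIntDe : ∀ r t : ℝ, Integrable
      (fun s => Ddir v p z e (planeMap x₀ ν e f r s t)) := by
    intro r t
    refine Continuous.integrable_of_hasCompactSupport ?_ ?_
    · exact cont_comp_planeMap x₀ ν e f _ (cont_Ddir hv hp) _ _ _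
        continuous_const continuous_id continuous_const
    · exact hcs_comp_section _ (hcs_Ddir hvs hps) _ (fun x => dot3 (x - x₀) e)
        (cont_dot3_sub x₀ e) (fun s => sece r s t)
  have hIntDf : ∀ r s : ℝ, Integrable
      (fun t => Ddir v p z f (planeMap x₀ ν e f r s t)) := by
    intro r s
    refine Continuous.integrable_of_hasCompactSupport ?_ ?_
    · exact cont_comp_planeMap x₀ ν e f _ (cont_Ddir hv hp) _ _ _
        continuous_const continuous_const continuous_id
    · exact hcs_comp_section _ (hcs_Ddir hvs hps) _ (fun x => dot3 (x - x₀) f)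
        (cont_dot3_sub x₀ f) (fun t => secf r s t)
  -- integrability of plane slices
  have hIntDe2 : ∀ r : ℝ, Integrable
      (fun q : ℝ × ℝ => Ddir v p z e (planeMap x₀ ν e f r q.1 q.2)) := by
    intro r
    refine Continuous.integrable_of_hasCompactSupport ?_ ?_
    · exact cont_comp_planeMap x₀ ν e f _ (cont_Ddir hv hp) _ _ _
        continuous_const continuous_fst continuous_snd
    · refine hcs_comp_section _ (hcs_Ddir hvs hps) _
        (fun x => (dot3 (x - x₀) e, dot3 (x - x₀) f))
        ((cont_dot3_sub x₀ e).prodMk (cont_dot3_sub x₀ f)) ?_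
      intro q
      simp only [sece, secf]
  have hIntDf2 : ∀ r : ℝ, Integrable
      (fun q : ℝ × ℝ => Ddir v p z f (planeMap x₀ ν e f r q.1 q.2)) := by
    intro r
    refine Continuous.integrable_of_hasCompactSupport ?_ ?_
    · exact cont_comp_planeMap x₀ ν e f _ (cont_Ddir hv hp) _ _ _
        continuous_const continuous_fst continuous_snd
    · refine hcs_comp_section _ (hcs_Ddir hvs hps) _
        (fun x => (dot3 (x - x₀) e, dot3 (x - x₀) f))
        ((cont_dot3_sub x₀ e).prodMk (cont_dot3_sub x₀ f)) ?_
      intro q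
      simp only [sece, secf]
  -- Step A: fundamental theorem of calculus in the normal direction
  have stepA : ∀ s t : ℝ, gdir v p z ν (planeMap x₀ ν e f 0 s t)
      = ∫ r in Iic (0:ℝ), Ddir v p z ν (planeMap x₀ ν e f r s t) := by
    intro s t
    exact (integral_Iic_deriv' _ _ 0 (hDerν s t) ((hIntDν s t).integrableOn)
      (hcsGν s t)).symm
  -- inner plane integrals vanish
  have innerE : ∀ r : ℝ,
      (∫ q : ℝ × ℝ, Ddir v p z e (planeMap x₀ ν e f r q.1 q.2)) = 0 := by
    intro r
    have hswap := (hIntDe2 r)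
    rw [MeasureTheory.Measure.volume_eq_prod] at hswap ⊢
    rw [MeasureTheory.integral_prod_symm _ hswap]
    have hin : ∀ t : ℝ, (∫ s : ℝ, Ddir v p z e (planeMap x₀ ν e f r s t)) = 0 := by
      intro t
      exact integral_line_deriv_zero _ _ (hDere r t) (hIntDe r t) (hcsGe r t)
    simp only [hin, integral_zero]
  have innerF : ∀ r : ℝ,
      (∫ q : ℝ × ℝ, Ddir v p z f (planeMap x₀ ν e f r q.1 q.2)) = 0 := by
    intro r
    have hswap := (hIntDf2 r)
    rw [MeasureTheory.Measure.volume_eq_prod] at hswap ⊢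
    rw [MeasureTheory.integral_prod _ hswap]
    have hin : ∀ s : ℝ, (∫ t : ℝ, Ddir v p z f (planeMap x₀ ν e f r s t)) = 0 := by
      intro s
      exact integral_line_deriv_zero _ _ (hDerf r s) (hIntDf r s) (hcsGf r s)
    simp only [hin, integral_zero]
  have inner0 : ∀ r : ℝ,
      (∫ q : ℝ × ℝ, Ddir v p z ν (planeMap x₀ ν e f r q.1 q.2)) = 0 := by
    intro r
    have hpt : ∀ y, Ddir v p z ν y = -Ddir v p z e y - Ddir v p z f y := by
      intro y
      have := Ddir_sum_zero (z := z) hv hp euler hν he hf hef heν hfν y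
      linarith
    calc (∫ q : ℝ × ℝ, Ddir v p z ν (planeMap x₀ ν e f r q.1 q.2))
        = ∫ q : ℝ × ℝ, (-(Ddir v p z e (planeMap x₀ ν e f r q.1 q.2))
            - Ddir v p z f (planeMap x₀ ν e f r q.1 q.2)) := by
          exact integral_congr_ae (Filter.Eventually.of_forall fun q => hpt _)
      _ = -(∫ q : ℝ × ℝ, Ddir v p z e (planeMap x₀ ν e f r q.1 q.2))
            - ∫ q : ℝ × ℝ, Ddir v p z f (planeMap x₀ ν e f r q.1 q.2) := by
          have hneg : Integrable
              (fun q : ℝ × ℝ => -Ddir v p z e (planeMap x₀ ν e f r q.1 q.2)) :=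
            (hIntDe2 r).neg
          rw [integral_sub hneg (hIntDf2 r), integral_neg]
      _ = 0 := by rw [innerE r, innerF r]; ring
  -- swap integrability
  have hbase : Integrable
      (fun w : (ℝ × ℝ) × ℝ => Ddir v p z ν (planeMap x₀ ν e f w.2 w.1.1 w.1.2)) := by
    refine Continuous.integrable_of_hasCompactSupport ?_ ?_
    · exact cont_comp_planeMap x₀ ν e f _ (cont_Ddir hv hp) _ _ _
        continuous_snd (continuous_fst.comp continuous_fst)
        (continuous_snd.comp continuous_fst)
    · refine hcs_comp_section _ (hcs_Ddir hvs hps) _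
        (fun x => ((dot3 (x - x₀) e, dot3 (x - x₀) f), dot3 (x - x₀) ν))
        (((cont_dot3_sub x₀ e).prodMk (cont_dot3_sub x₀ f)).prodMk
          (cont_dot3_sub x₀ ν)) ?_
      intro w
      simp only [sece, secf, secν]
  have hswap : Integrable (Function.uncurry fun (q : ℝ × ℝ) (r : ℝ) =>
      Set.indicator (Iic (0:ℝ)) (fun r' => Ddir v p z ν (planeMap x₀ ν e f r' q.1 q.2)) r)
      ((volume : Measure (ℝ × ℝ)).prod (volume : Measure ℝ)) := by
    have heq : (Function.uncurry fun (q : ℝ × ℝ) (r : ℝ) =>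
        Set.indicator (Iic (0:ℝ)) (fun r' => Ddir v p z ν (planeMap x₀ ν e f r' q.1 q.2)) r)
        = Set.indicator ((Set.univ : Set (ℝ × ℝ)) ×ˢ Iic (0:ℝ))
          (fun w : (ℝ × ℝ) × ℝ => Ddir v p z ν (planeMap x₀ ν e f w.2 w.1.1 w.1.2)) := by
      funext w
      by_cases hw : w.2 ∈ Iic (0:ℝ)
      · simp [Function.uncurry, Set.indicator_of_mem, hw, Set.mem_prod]
      · simp [Function.uncurry, Set.indicator_of_notMem, hw, Set.mem_prod]
    rw [heq, ← MeasureTheory.Measure.volume_eq_prod]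
    exact hbase.indicator (MeasurableSet.univ.prod measurableSet_Iic)
  -- main computation
  calc ∫ q : ℝ × ℝ, dot3 (v (x₀ + q.1 • e + q.2 • f)) z *
        dot3 (v (x₀ + q.1 • e + q.2 • f)) ν
      = ∫ q : ℝ × ℝ, gdir v p z ν (planeMap x₀ ν e f 0 q.1 q.2) := by
        exact integral_congr_ae (Filter.Eventually.of_forall fun q => step0 q.1 q.2)
    _ = ∫ q : ℝ × ℝ, ∫ r in Iic (0:ℝ), Ddir v p z ν (planeMap x₀ ν e f r q.1 q.2) := by
        exact integral_congr_ae (Filter.Eventually.of_forall fun q => stepA q.1 q.2)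
    _ = ∫ q : ℝ × ℝ, ∫ r : ℝ,
          Set.indicator (Iic (0:ℝ)) (fun r' => Ddir v p z ν (planeMap x₀ ν e f r' q.1 q.2)) r := by
        refine integral_congr_ae (Filter.Eventually.of_forall fun q => ?_)
        exact (MeasureTheory.integral_indicator measurableSet_Iic).symm
    _ = ∫ r : ℝ, ∫ q : ℝ × ℝ,
          Set.indicator (Iic (0:ℝ)) (fun r' => Ddir v p z ν (planeMap x₀ ν e f r' q.1 q.2)) r := by
        exact MeasureTheory.integral_integral_swap hswap
    _ = ∫ r : ℝ, Set.indicator (Iic (0:ℝ))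
          (fun r' => ∫ q : ℝ × ℝ, Ddir v p z ν (planeMap x₀ ν e f r' q.1 q.2)) r := by
        refine integral_congr_ae (Filter.Eventually.of_forall fun r => ?_)
        by_cases hr : r ∈ Iic (0:ℝ)
        · simp [Set.indicator_of_mem hr]
        · simp [Set.indicator_of_notMem hr]
    _ = 0 := by simp [inner0]
end

section
/- Let v : ℝ³ → ℝ³ and p : ℝ³ → ℝ be smooth compactly supported solutions of the steady Euler momentum equations. Then the function x₃ ↦ ∫_{ℝ²} (p + (v³)²)(x₁, x₂, x₃) dx₁dx₂ is constant (hence identically zero). -/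
open MeasureTheory

open Set

section Helpers
variable {f g : (Fin 3 → ℝ) → ℝ}

lemma cont_pd (hf : ContDiff ℝ (⊤ : ℕ∞) f) (i : Fin 3) : Continuous (pd f i) :=
  (hf.continuous_fderiv (by simp)).clm_apply continuous_const

lemma hcs_pd (hfs : HasCompactSupport f) (i : Fin 3) : HasCompactSupport (pd f i) :=
  hfs.fderiv_apply (𝕜 := ℝ) (Pi.single i 1)

lemma line0 (y t : ℝ) : (fun s => ![s, y, t] : ℝ → Fin 3 → ℝ)
    = fun s => ![(0:ℝ), y, t] + s • Pi.single 0 1 := by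
  funext s i; fin_cases i <;> simp

lemma line1 (y t : ℝ) : (fun s => ![y, s, t] : ℝ → Fin 3 → ℝ)
    = fun s => ![y, (0:ℝ), t] + s • Pi.single 1 1 := by
  funext s i; fin_cases i <;> simp

lemma line2 (y t : ℝ) : (fun s => ![y, t, s] : ℝ → Fin 3 → ℝ)
    = fun s => ![y, t, (0:ℝ)] + s • Pi.single 2 1 := by
  funext s i; fin_cases i <;> simp

lemma bound_of_hcs (hfs : HasCompactSupport f) :
    ∃ R : ℝ, 0 ≤ R ∧ ∀ x : Fin 3 → ℝ, f x ≠ 0 → ∀ i, |x i| ≤ R := by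
  obtain ⟨R, hR⟩ := hfs.isBounded.subset_closedBall 0
  refine ⟨max R 0, le_max_right _ _, fun x hx i => ?_⟩
  have hx' : x ∈ tsupport f := subset_tsupport f hx
  have := hR hx'
  simp only [Metric.mem_closedBall, dist_zero_right] at this
  calc |x i| = ‖x i‖ := rfl
    _ ≤ ‖x‖ := norm_le_pi_norm x i
    _ ≤ R := this
    _ ≤ max R 0 := le_max_left _ _

lemma core_hasDerivAt (hg : ContDiff ℝ (⊤ : ℕ∞) g) (A : Fin 3 → ℝ) (i : Fin 3) (s : ℝ) :
    HasDerivAt (fun r => g (A + r • (Pi.single i 1 : Fin 3 → ℝ))) (pd g i (A + s • (Pi.single i 1 : Fin 3 → ℝ))) s := by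
  have h1 : HasDerivAt (fun r : ℝ => A + r • (Pi.single i 1 : Fin 3 → ℝ))
      (Pi.single i 1) s := by
    simpa using ((hasDerivAt_id s).smul_const (Pi.single i 1 : Fin 3 → ℝ)).const_add A
  exact ((hg.differentiable (by simp) _).hasFDerivAt).comp_hasDerivAt s h1

lemma core_contDiff (hg : ContDiff ℝ (⊤ : ℕ∞) g) (A : Fin 3 → ℝ) (i : Fin 3) :
    ContDiff ℝ 1 (fun r : ℝ => g (A + r • (Pi.single i 1 : Fin 3 → ℝ))) :=
  (hg.of_le (by simp)).comp (contDiff_const.add (contDiff_id.smul contDiff_const))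

lemma core_hcs (hgs : HasCompactSupport g) (A : Fin 3 → ℝ) (i : Fin 3) :
    HasCompactSupport (fun r : ℝ => g (A + r • (Pi.single i 1 : Fin 3 → ℝ))) := by
  obtain ⟨R, -, hR⟩ := bound_of_hcs hgs
  apply HasCompactSupport.intro (isCompact_Icc (a := -R - |A i|) (b := R + |A i|))
  intro r hr
  by_contra h0
  have h1 : |(A + r • (Pi.single i 1 : Fin 3 → ℝ)) i| ≤ R := hR _ h0 i
  simp only [Pi.add_apply, Pi.smul_apply, Pi.single_eq_same, smul_eq_mul, mul_one] at h1
  have := abs_le.1 h1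
  have h2 := abs_le.1 (le_refl |A i|) -- |A i| ≤ |A i| trivial; use neg_abs_le, le_abs_self
  exact hr ⟨by have := neg_abs_le (A i); linarith, by have := le_abs_self (A i); linarith⟩

lemma integral_deriv_zero (u : ℝ → ℝ) (hu : ContDiff ℝ 1 u) (hus : HasCompactSupport u) :
    ∫ x : ℝ, deriv u x = 0 := by
  have hi : Integrable (deriv u) :=
    (hu.continuous_deriv le_rfl).integrable_of_hasCompactSupport hus.deriv
  rw [← intervalIntegral.integral_Iic_add_Ioi (b := (0:ℝ)) hi.integrableOn hi.integrableOn,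
    hus.integral_Iic_deriv_eq hu 0, hus.integral_Ioi_deriv_eq hu 0]
  ring

lemma core_integral_zero (hg : ContDiff ℝ (⊤ : ℕ∞) g) (hgs : HasCompactSupport g)
    (A : Fin 3 → ℝ) (i : Fin 3) :
    ∫ r : ℝ, pd g i (A + r • (Pi.single i 1 : Fin 3 → ℝ)) = 0 := by
  have hderiv : (fun r : ℝ => pd g i (A + r • (Pi.single i 1 : Fin 3 → ℝ)))
      = deriv (fun r : ℝ => g (A + r • (Pi.single i 1 : Fin 3 → ℝ))) :=
    funext fun r => ((core_hasDerivAt hg A i r).deriv).symm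
  rw [hderiv]
  exact integral_deriv_zero _ (core_contDiff hg A i) (core_hcs hgs A i)

lemma slice_zero0 (hg : ContDiff ℝ (⊤ : ℕ∞) g) (hgs : HasCompactSupport g) (y t : ℝ) :
    ∫ x : ℝ, pd g 0 ![x, y, t] = 0 := by
  rw [show (fun x : ℝ => pd g 0 ![x, y, t])
      = fun x : ℝ => pd g 0 (![(0:ℝ), y, t] + x • (Pi.single 0 1 : Fin 3 → ℝ)) from
    funext fun x => by rw [congrFun (line0 y t) x]]
  exact core_integral_zero hg hgs _ 0

lemma slice_zero1 (hg : ContDiff ℝ (⊤ : ℕ∞) g) (hgs : HasCompactSupport g) (y t : ℝ) :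
    ∫ x : ℝ, pd g 1 ![y, x, t] = 0 := by
  rw [show (fun x : ℝ => pd g 1 ![y, x, t])
      = fun x : ℝ => pd g 1 (![y, (0:ℝ), t] + x • (Pi.single 1 1 : Fin 3 → ℝ)) from
    funext fun x => by rw [congrFun (line1 y t) x]]
  exact core_integral_zero hg hgs _ 1

end Helpers

section Part2
variable {f g : (Fin 3 → ℝ) → ℝ}

lemma cont_iota2 (t : ℝ) : Continuous (fun q : ℝ × ℝ => (![q.1, q.2, t] : Fin 3 → ℝ)) := by
  apply continuous_pi; intro i; fin_cases i <;> simp <;> fun_prop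

lemma cont_iota3 : Continuous (fun a : (ℝ × ℝ) × ℝ => (![a.1.1, a.1.2, a.2] : Fin 3 → ℝ)) := by
  apply continuous_pi; intro i; fin_cases i <;> simp <;> fun_prop

lemma slice_hcs2 (hs : HasCompactSupport g) (t : ℝ) :
    HasCompactSupport (fun q : ℝ × ℝ => g ![q.1, q.2, t]) := by
  obtain ⟨R, hR0, hR⟩ := bound_of_hcs hs
  apply HasCompactSupport.intro ((isCompact_Icc (a := -R) (b := R)).prod
    (isCompact_Icc (a := -R) (b := R)))
  intro q hq
  by_contra h0
  have h1 := hR _ h0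
  exact hq ⟨abs_le.1 (by simpa using h1 0), abs_le.1 (by simpa using h1 1)⟩

lemma big_hcs (hs : HasCompactSupport g) :
    HasCompactSupport (fun a : (ℝ × ℝ) × ℝ => g ![a.1.1, a.1.2, a.2]) := by
  obtain ⟨R, hR0, hR⟩ := bound_of_hcs hs
  apply HasCompactSupport.intro (((isCompact_Icc (a := -R) (b := R)).prod
    (isCompact_Icc (a := -R) (b := R))).prod (isCompact_Icc (a := -R) (b := R)))
  intro a ha
  by_contra h0
  have h1 := hR _ h0
  exact ha ⟨⟨abs_le.1 (by simpa using h1 0), abs_le.1 (by simpa using h1 1)⟩,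
    abs_le.1 (by simpa using h1 2)⟩

lemma ftc_slice (hf : ContDiff ℝ (⊤ : ℕ∞) f) {R c T : ℝ}
    (hR : ∀ x : Fin 3 → ℝ, f x ≠ 0 → ∀ i, |x i| ≤ R) (hRT : R < T) (a b : ℝ) :
    f ![a, b, c] = -∫ t in c..T, pd f 2 ![a, b, t] := by
  have hfun : ∀ s : ℝ, (![a, b, s] : Fin 3 → ℝ)
      = ![a, b, (0:ℝ)] + s • (Pi.single 2 1 : Fin 3 → ℝ) :=
    fun s => congrFun (line2 a b) s
  have hderiv : deriv (fun r : ℝ => f (![a, b, (0:ℝ)] + r • (Pi.single 2 1 : Fin 3 → ℝ)))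
      = fun x => pd f 2 (![a, b, (0:ℝ)] + x • (Pi.single 2 1 : Fin 3 → ℝ)) :=
    funext fun x => (core_hasDerivAt hf ![a, b, (0:ℝ)] 2 x).deriv
  have hint : IntervalIntegrable
      (deriv (fun r : ℝ => f (![a, b, (0:ℝ)] + r • (Pi.single 2 1 : Fin 3 → ℝ)))) volume c T := by
    rw [hderiv]
    exact ((cont_pd hf 2).comp
      (continuous_const.add (continuous_id.smul continuous_const))).intervalIntegrable c T
  have hsub := intervalIntegral.integral_deriv_eq_sub
    (f := fun r : ℝ => f (![a, b, (0:ℝ)] + r • (Pi.single 2 1 : Fin 3 → ℝ)))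
    (a := c) (b := T)
    (fun x _ => (core_hasDerivAt hf ![a, b, (0:ℝ)] 2 x).differentiableAt) hint
  have huT : f (![a, b, (0:ℝ)] + T • (Pi.single 2 1 : Fin 3 → ℝ)) = 0 := by
    by_contra h0
    have h1 := hR _ h0 2
    have h2 : (![a, b, (0:ℝ)] + T • (Pi.single 2 1 : Fin 3 → ℝ)) 2 = T := by simp
    rw [h2] at h1
    have := abs_le.1 h1
    linarith
  have heqint : (∫ t in c..T, pd f 2 ![a, b, t])
      = ∫ t in c..T, deriv (fun r : ℝ => f (![a, b, (0:ℝ)] + r • (Pi.single 2 1 : Fin 3 → ℝ))) t := by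
    rw [hderiv]
    apply intervalIntegral.integral_congr
    intro t _
    show pd f 2 ![a, b, t] = pd f 2 (![a, b, (0:ℝ)] + t • (Pi.single 2 1 : Fin 3 → ℝ))
    rw [hfun t]
  rw [heqint, hsub]
  beta_reduce
  rw [huT, hfun c]
  ring

lemma key (f g₀ g₁ : (Fin 3 → ℝ) → ℝ) (hf : ContDiff ℝ (⊤ : ℕ∞) f) (hg₀ : ContDiff ℝ (⊤ : ℕ∞) g₀)
    (hg₁ : ContDiff ℝ (⊤ : ℕ∞) g₁) (hfs : HasCompactSupport f) (hg₀s : HasCompactSupport g₀)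
    (hg₁s : HasCompactSupport g₁)
    (heq : ∀ x, pd f 2 x = -(pd g₀ 0 x + pd g₁ 1 x)) (c : ℝ) :
    ∫ q : ℝ × ℝ, f ![q.1, q.2, c] = 0 := by
  obtain ⟨R, hR0, hR⟩ := bound_of_hcs hfs
  set T : ℝ := max R c + 1 with hT
  have hRT : R < T := lt_of_le_of_lt (le_max_left R c) (by simp [hT])
  have hcT : c ≤ T := le_of_lt (lt_of_le_of_lt (le_max_right R c) (by simp [hT]))
  have hzero : ∀ t : ℝ, ∫ q : ℝ × ℝ, pd f 2 ![q.1, q.2, t] = 0 := by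
    intro t
    have hi0 : Integrable (fun q : ℝ × ℝ => pd g₀ 0 ![q.1, q.2, t]) :=
      ((cont_pd hg₀ 0).comp (cont_iota2 t)).integrable_of_hasCompactSupport
        (slice_hcs2 (hcs_pd hg₀s 0) t)
    have hi1 : Integrable (fun q : ℝ × ℝ => pd g₁ 1 ![q.1, q.2, t]) :=
      ((cont_pd hg₁ 1).comp (cont_iota2 t)).integrable_of_hasCompactSupport
        (slice_hcs2 (hcs_pd hg₁s 1) t)
    have e0 : ∫ q : ℝ × ℝ, pd g₀ 0 ![q.1, q.2, t] = 0 := by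
      rw [show (volume : Measure (ℝ × ℝ)) = (volume : Measure ℝ).prod volume from
        Measure.volume_eq_prod ℝ ℝ] at hi0 ⊢
      rw [MeasureTheory.integral_prod_symm _ hi0]
      simp only
      rw [show (fun y : ℝ => ∫ x : ℝ, pd g₀ 0 ![x, y, t]) = fun _ => (0:ℝ) from
        funext fun y => slice_zero0 hg₀ hg₀s y t]
      simp
    have e1 : ∫ q : ℝ × ℝ, pd g₁ 1 ![q.1, q.2, t] = 0 := by
      rw [show (volume : Measure (ℝ × ℝ)) = (volume : Measure ℝ).prod volume from
        Measure.volume_eq_prod ℝ ℝ] at hi1 ⊢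
      rw [MeasureTheory.integral_prod _ hi1]
      simp only
      rw [show (fun x : ℝ => ∫ y : ℝ, pd g₁ 1 ![x, y, t]) = fun _ => (0:ℝ) from
        funext fun x => slice_zero1 hg₁ hg₁s x t]
      simp
    rw [show (fun q : ℝ × ℝ => pd f 2 ![q.1, q.2, t])
        = fun q : ℝ × ℝ => -(pd g₀ 0 ![q.1, q.2, t] + pd g₁ 1 ![q.1, q.2, t]) from
      funext fun q => heq _]
    rw [integral_neg, integral_add hi0 hi1, e0, e1]
    simp
  have hint : Integrable (Function.uncurry fun (q : ℝ × ℝ) (t : ℝ) => pd f 2 ![q.1, q.2, t])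
      ((volume : Measure (ℝ × ℝ)).prod ((volume : Measure ℝ).restrict (Set.Ioc c T))) := by
    have h1 : Integrable (fun a : (ℝ × ℝ) × ℝ => pd f 2 ![a.1.1, a.1.2, a.2]) volume :=
      ((cont_pd hf 2).comp cont_iota3).integrable_of_hasCompactSupport
        (big_hcs (hcs_pd hfs 2))
    have h2 : (volume : Measure (ℝ × ℝ)).prod ((volume : Measure ℝ).restrict (Set.Ioc c T))
        = (volume : Measure ((ℝ × ℝ) × ℝ)).restrict (Set.univ ×ˢ Set.Ioc c T) := by
      rw [Measure.volume_eq_prod (ℝ × ℝ) ℝ, ← Measure.prod_restrict, Measure.restrict_univ]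
    rw [h2]
    exact h1.restrict
  calc ∫ q : ℝ × ℝ, f ![q.1, q.2, c]
      = ∫ q : ℝ × ℝ, -∫ t in c..T, pd f 2 ![q.1, q.2, t] := by
        rw [show (fun q : ℝ × ℝ => f ![q.1, q.2, c])
            = fun q : ℝ × ℝ => -∫ t in c..T, pd f 2 ![q.1, q.2, t] from
          funext fun q => ftc_slice hf hR hRT q.1 q.2]
    _ = -∫ q : ℝ × ℝ, ∫ t in Set.Ioc c T, pd f 2 ![q.1, q.2, t] := by
        rw [integral_neg]
        congr 1
        rw [show (fun q : ℝ × ℝ => ∫ t in c..T, pd f 2 ![q.1, q.2, t])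
            = fun q : ℝ × ℝ => ∫ t in Set.Ioc c T, pd f 2 ![q.1, q.2, t] from
          funext fun q => intervalIntegral.integral_of_le hcT]
    _ = -∫ t in Set.Ioc c T, ∫ q : ℝ × ℝ, pd f 2 ![q.1, q.2, t] := by
        rw [MeasureTheory.integral_integral_swap hint]
    _ = 0 := by
        rw [show (fun t : ℝ => ∫ q : ℝ × ℝ, pd f 2 ![q.1, q.2, t]) = fun _ => (0:ℝ) from
          funext fun t => hzero t]
        simp

end Part2

theorem stmt2
    (v : (Fin 3 → ℝ) → (Fin 3 → ℝ)) (p : (Fin 3 → ℝ) → ℝ)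
    (hv : ContDiff ℝ (⊤ : ℕ∞) v) (hp : ContDiff ℝ (⊤ : ℕ∞) p)
    (hvs : HasCompactSupport v) (hps : HasCompactSupport p)
    (euler : ∀ (x : Fin 3 → ℝ) (i : Fin 3),
      (∑ j : Fin 3, pd (fun y => v y i * v y j) j x) + pd p i x = 0) :
    (∀ c c' : ℝ,
      (∫ q : ℝ × ℝ, (p ![q.1, q.2, c] + v ![q.1, q.2, c] 2 ^ 2)) =
      ∫ q : ℝ × ℝ, (p ![q.1, q.2, c'] + v ![q.1, q.2, c'] 2 ^ 2)) ∧
    ∀ c : ℝ, (∫ q : ℝ × ℝ, (p ![q.1, q.2, c] + v ![q.1, q.2, c] 2 ^ 2)) = 0 := by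
  have hv2 : ContDiff ℝ (⊤ : ℕ∞) (fun x => v x 2) := contDiff_pi.mp hv 2
  have hv0 : ContDiff ℝ (⊤ : ℕ∞) (fun x => v x 0) := contDiff_pi.mp hv 0
  have hv1 : ContDiff ℝ (⊤ : ℕ∞) (fun x => v x 1) := contDiff_pi.mp hv 1
  have hv2s : HasCompactSupport (fun x => v x 2) :=
    hvs.comp_left (g := fun w : Fin 3 → ℝ => w 2) rfl
  have hf : ContDiff ℝ (⊤ : ℕ∞) (fun x => p x + v x 2 * v x 2) := hp.add (hv2.mul hv2)
  have hg₀ : ContDiff ℝ (⊤ : ℕ∞) (fun x => v x 2 * v x 0) := hv2.mul hv0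
  have hg₁ : ContDiff ℝ (⊤ : ℕ∞) (fun x => v x 2 * v x 1) := hv2.mul hv1
  have hfs : HasCompactSupport (fun x => p x + v x 2 * v x 2) := hps.add hv2s.mul_right
  have hg₀s : HasCompactSupport (fun x => v x 2 * v x 0) := hv2s.mul_right
  have hg₁s : HasCompactSupport (fun x => v x 2 * v x 1) := hv2s.mul_right
  have heq : ∀ x, pd (fun x => p x + v x 2 * v x 2) 2 x
      = -(pd (fun x => v x 2 * v x 0) 0 x + pd (fun x => v x 2 * v x 1) 1 x) := by
    intro x
    have he := euler x 2
    rw [Fin.sum_univ_three] at he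
    have hsplit : pd (fun x => p x + v x 2 * v x 2) 2 x
        = pd p 2 x + pd (fun y => v y 2 * v y 2) 2 x := by
      show fderiv ℝ (fun y => p y + v y 2 * v y 2) x (Pi.single 2 1) = _
      rw [fderiv_fun_add (hp.differentiable (by simp) x) ((hv2.mul hv2).differentiable (by simp) x)]
      rfl
    rw [hsplit]
    linarith
  have hzero : ∀ c : ℝ,
      (∫ q : ℝ × ℝ, (p ![q.1, q.2, c] + v ![q.1, q.2, c] 2 ^ 2)) = 0 := by
    intro c
    have h := key (fun x => p x + v x 2 * v x 2) (fun x => v x 2 * v x 0)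
      (fun x => v x 2 * v x 1) hf hg₀ hg₁ hfs hg₀s hg₁s heq c
    simpa [pow_two] using h
  exact ⟨fun c c' => by rw [hzero c, hzero c'], hzero⟩
end

section
/- Let f : ℝ² → ℝ be a continuous compactly supported function all of whose line integrals vanish, i.e. ∫_ℝ f(x + tξ) dt = 0 for every x ∈ ℝ² and every unit vector ξ. Then f = 0 identically. -/
/-!
Fourier slice argument. Given a frequency `w`, choose orthonormal coordinates `(s, t)` whose
`t`-axis is orthogonal to `w`. In these coordinates the phase `𝐞 (-⟪v, w⟫)` depends only on `s`,
so the Fourier integral `𝓕 f w` becomes an `s`-integral of line integrals of `f` along the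
`t`-direction, all of which vanish. Thus `𝓕 f = 0`, and Fourier inversion gives `f = 0`.
-/

open MeasureTheory Module FourierTransform Real
open scoped RealInnerProductSpace

variable {E F : Type*} [NormedAddCommGroup E] [InnerProductSpace ℝ E] [FiniteDimensional ℝ E]
  [NormedAddCommGroup F] [NormedSpace ℂ F]

theorem OrthonormalBasis.exists_fin_two_inner_eq_zero (hE : finrank ℝ E = 2) (w : E) :
    ∃ b : OrthonormalBasis (Fin 2) ℝ E, ⟪b 1, w⟫ = 0 := by
  have hperp : (ℝ ∙ w)ᗮ ≠ ⊥ := by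
    intro hbot
    have hsum := (ℝ ∙ w).finrank_add_finrank_orthogonal
    have hle := finrank_span_le_card (R := ℝ) ({w} : Set E)
    rw [hbot, finrank_bot, hE] at hsum
    simp only [Set.toFinset_singleton, Finset.card_singleton] at hle
    omega
  obtain ⟨ξ, hξw, hξ⟩ := Submodule.exists_mem_ne_zero_of_ne_bot hperp
  obtain ⟨b, hb⟩ := Orthonormal.exists_orthonormalBasis_extension_of_card_eq
    (by simpa using hE) (v := fun _ : Fin 2 => ‖ξ‖⁻¹ • ξ) (s := {1})
    (orthonormal_subsingleton_iff.2 fun _ => norm_smul_inv_norm hξ)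
  refine ⟨b, ?_⟩
  have hξw' : ⟪ξ, w⟫ = 0 :=
    inner_eq_zero_symm.1 (Submodule.mem_orthogonal_singleton_iff_inner_right.1 hξw)
  rw [hb 1 rfl, real_inner_smul_left, hξw', mul_zero]

variable [MeasurableSpace E] [BorelSpace E]

theorem OrthonormalBasis.integral_eq_integral_integral_fin_two [CompleteSpace F]
    (b : OrthonormalBasis (Fin 2) ℝ E) {g : E → F} (hg : Integrable g) :
    ∫ v, g v = ∫ s : ℝ, ∫ t : ℝ, g (s • b 0 + t • b 1) := by
  let M : (ℝ × ℝ) ≃ᵐ E := MeasurableEquiv.finTwoArrow.symm.trans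
    ((MeasurableEquiv.toLp 2 (Fin 2 → ℝ)).trans b.measurableEquiv.symm)
  have hM : MeasurePreserving M (volume.prod volume) volume :=
    b.measurePreserving_measurableEquiv.symm.comp
      ((PiLp.volume_preserving_toLp (Fin 2)).comp (volume_preserving_finTwoArrow ℝ).symm)
  have hM_apply (p : ℝ × ℝ) : M p = p.1 • b 0 + p.2 • b 1 := by
    change b.repr.symm _ = _
    simp [← b.sum_repr_symm, Fin.sum_univ_two]
  have hgM : Integrable (fun p => g (M p)) (volume.prod volume) :=
    (hM.integrable_comp_emb M.measurableEmbedding).2 hg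
  rw [← hM.integral_comp' g, integral_prod _ hgM]
  simp only [hM_apply]

theorem OrthonormalBasis.fourier_eq_zero_of_integral_line_eq_zero [CompleteSpace F]
    (b : OrthonormalBasis (Fin 2) ℝ E) {f : E → F} (hf : Integrable f) {w : E}
    (hw : ⟪b 1, w⟫ = 0) (h : ∀ x, ∫ t : ℝ, f (x + t • b 1) = 0) : 𝓕 f w = 0 := by
  have hphase (s t : ℝ) : 𝐞 (-⟪s • b 0 + t • b 1, w⟫) = 𝐞 (-(s * ⟪b 0, w⟫)) := by
    rw [inner_add_left, real_inner_smul_left, real_inner_smul_left, hw, mul_zero, add_zero]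
  rw [Real.fourier_eq,
    b.integral_eq_integral_integral_fin_two ((fourierIntegral_convergent_iff w).2 hf)]
  simp only [hphase, Circle.smul_def, integral_smul, h, smul_zero, integral_zero]

theorem eq_zero_of_forall_integral_line_eq_zero [CompleteSpace F] (hE : finrank ℝ E = 2)
    {f : E → F} (hc : Continuous f) (hi : Integrable f)
    (h : ∀ x ξ : E, ‖ξ‖ = 1 → ∫ t : ℝ, f (x + t • ξ) = 0) : f = 0 := by
  have hF : 𝓕 f = 0 := funext fun w => by
    obtain ⟨b, hb⟩ := OrthonormalBasis.exists_fin_two_inner_eq_zero hE w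
    exact b.fourier_eq_zero_of_integral_line_eq_zero hi hb fun x => h x _ (b.orthonormal.1 1)
  have hinv := hc.fourierInv_fourier_eq hi (by rw [hF]; exact integrable_zero _ _ _)
  rw [← hinv, hF]
  ext v
  simp [Real.fourierInv_eq]

theorem stmt17
    (f : (Fin 2 → ℝ) → ℝ)
    (hf : Continuous f) (hfs : HasCompactSupport f)
    (h : ∀ (x ξ : Fin 2 → ℝ), (∑ i, ξ i ^ 2 = 1) →
      (∫ t : ℝ, f (x + t • ξ)) = 0) :
    f = 0 := by
  let g : EuclideanSpace ℝ (Fin 2) → ℂ := fun x => (f x.ofLp : ℂ)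
  have hg : Continuous g := by fun_prop
  have hgi : Integrable g :=
    hg.integrable_of_hasCompactSupport
      ((hfs.comp_left Complex.ofReal_zero).comp_homeomorph (PiLp.homeomorph 2 _))
  have hg0 := eq_zero_of_forall_integral_line_eq_zero finrank_euclideanSpace_fin hg hgi
    fun x ξ hξ => by
      have hξ' : ∑ i, ξ.ofLp i ^ 2 = 1 := by
        rw [← EuclideanSpace.real_norm_sq_eq, hξ, one_pow]
      simp only [g, WithLp.ofLp_add, WithLp.ofLp_smul, integral_complex_ofReal, h _ _ hξ',
        Complex.ofReal_zero]
  funext x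
  simpa [g] using congrFun hg0 (WithLp.toLp 2 x)
end
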